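/- Let p be a prime, let α ∈ ℤ_p be a p-adic unit and let β ∈ p·ℤ_p. Set a = α + β, ξ = α·β and δ = α − β. Then, in the space of 2×2 matrices over ℚ_p, the sequence n ↦ [[a, −1], [ξ, 0]]^{n!} converges entrywise to δ^{-1} · [[α, −1], [ξ, −β]]. -/

import Mathlib

/-!
The matrix `!![α + β, -1; αβ, 0]` has the eigenvalues `α ≠ β`, so its `m`-th power is
`αᵐ • E_α + βᵐ • E_β` with `E_α`, `E_β` the complementary eigenprojections. Along `m = n!`,
`α ^ n! → 1` because `φ(pᵏ)`, the order of `(ℤ/pᵏ)ˣ`, divides `n!` for large `n`, and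
`β ^ n! → 0` because `‖β‖ < 1`; so the powers converge to `E_α`.
-/

open Filter Matrix Topology

section EigenProjection

variable {K : Type*} [Field K]

/-- The projection onto the `a`-eigenline of `!![a + b, -1; a * b, 0]` along the `b`-eigenline. -/
def eigenproj (a b : K) : Matrix (Fin 2) (Fin 2) K := (a - b)⁻¹ • !![a, -1; a * b, -b]

theorem mul_eigenproj (a b : K) : !![a + b, -1; a * b, 0] * eigenproj a b = a • eigenproj a b := by
  rw [eigenproj, mul_smul_comm, smul_comm, mul_fin_two]
  congr 1
  ext i j; fin_cases i <;> fin_cases j <;> simp <;> ring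

theorem eigenproj_add_eigenproj {a b : K} (hab : a ≠ b) : eigenproj a b + eigenproj b a = 1 := by
  have : a - b ≠ 0 := sub_ne_zero.2 hab
  have : b - a ≠ 0 := sub_ne_zero.2 hab.symm
  ext i j; fin_cases i <;> fin_cases j <;> simp [eigenproj] <;> field_simp <;> ring

theorem pow_eq_eigenproj {a b : K} (hab : a ≠ b) (n : ℕ) :
    !![a + b, -1; a * b, 0] ^ n = a ^ n • eigenproj a b + b ^ n • eigenproj b a := by
  induction n with
  | zero => simp [eigenproj_add_eigenproj hab]
  | succ n ih =>
    have hba : !![b + a, -1; b * a, 0] = !![a + b, -1; a * b, 0] := by rw [add_comm, mul_comm]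
    rw [pow_succ', ih, mul_add, mul_smul_comm, mul_smul_comm, mul_eigenproj, ← hba, mul_eigenproj,
      smul_smul, smul_smul, ← pow_succ, ← pow_succ]

theorem tendsto_pow_eigenproj [TopologicalSpace K] [ContinuousAdd K] [ContinuousMul K]
    {ι : Type*} {l : Filter ι} {m : ι → ℕ} {a b : K} (hab : a ≠ b)
    (ha : Tendsto (fun i => a ^ m i) l (𝓝 1)) (hb : Tendsto (fun i => b ^ m i) l (𝓝 0)) :
    Tendsto (fun i => !![a + b, -1; a * b, 0] ^ m i) l (𝓝 (eigenproj a b)) := by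
  simp only [pow_eq_eigenproj hab]
  simpa using (ha.smul_const (eigenproj a b)).add (hb.smul_const (eigenproj b a))

end EigenProjection

namespace PadicInt

variable {p : ℕ} [Fact p.Prime]

theorem pow_factorial_sub_one_mem_span {u : ℤ_[p]} (hu : IsUnit u) {k n : ℕ}
    (hn : Nat.totient (p ^ k) ≤ n) : u ^ n.factorial - 1 ∈ Ideal.span {(p : ℤ_[p]) ^ k} := by
  rw [← ker_toZModPow, RingHom.mem_ker, map_sub, map_one, sub_eq_zero, map_pow]
  obtain ⟨c, hc⟩ := Nat.dvd_factorial (Nat.totient_pos.2 (pow_pos (Fact.out : p.Prime).pos k)) hn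
  have heuler : toZModPow k u ^ Nat.totient (p ^ k) = 1 := by
    simpa only [Units.val_pow_eq_pow_val, IsUnit.unit_spec, Units.val_one] using
      congrArg Units.val (ZMod.pow_totient (hu.map (toZModPow k)).unit)
  rw [hc, pow_mul, heuler, one_pow]

theorem tendsto_pow_factorial_of_isUnit {u : ℤ_[p]} (hu : IsUnit u) :
    Tendsto (fun n : ℕ => u ^ n.factorial) atTop (𝓝 1) := by
  refine Metric.tendsto_atTop.2 fun ε hε => ?_
  obtain ⟨k, hk⟩ := exists_pow_neg_lt p hε
  refine ⟨Nat.totient (p ^ k), fun n hn => ?_⟩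
  rw [dist_eq_norm]
  exact ((norm_le_pow_iff_mem_span_pow _ k).2 (pow_factorial_sub_one_mem_span hu hn)).trans_lt hk

end PadicInt

/-- Hida's ordinary projector on the 2-dimensional space on which `U_p` acts through
the matrix `[[a, −1], [ξ, 0]]`, with `a = α + β`, `ξ = α·β`, `α` a `p`-adic unit and
`β ∈ pℤ_p`: the sequence `n ↦ [[a, −1], [ξ, 0]]^{n!}` converges entrywise to
`δ⁻¹ • [[α, −1], [ξ, −β]]` where `δ = α − β`. -/
theorem up_matrix_pow_factorial_tendsto (p : ℕ) [Fact p.Prime] (α β : ℤ_[p])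
    (hα : IsUnit α) (hβ : β ∈ Ideal.span {(p : ℤ_[p])}) :
    Filter.Tendsto
      (fun n : ℕ =>
        (!![((α + β : ℤ_[p]) : ℚ_[p]), -1; ((α * β : ℤ_[p]) : ℚ_[p]), 0]) ^ n.factorial)
      Filter.atTop
      (nhds (((α - β : ℤ_[p]) : ℚ_[p])⁻¹ •
        !![(α : ℚ_[p]), -1; ((α * β : ℤ_[p]) : ℚ_[p]), -(β : ℚ_[p])])) := by
  have hβ_small : ‖β‖ < 1 := (PadicInt.norm_lt_one_iff_dvd β).2 (Ideal.mem_span_singleton.1 hβ)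
  have hαβ : (α : ℚ_[p]) ≠ β := fun h =>
    PadicInt.not_isUnit_iff.2 hβ_small (PadicInt.ext h ▸ hα)
  have hα_lim : Tendsto (fun n : ℕ => (α : ℚ_[p]) ^ n.factorial) atTop (𝓝 1) :=
    (continuous_subtype_val.tendsto (1 : ℤ_[p])).comp
      (PadicInt.tendsto_pow_factorial_of_isUnit hα)
  have hβ_lim : Tendsto (fun n : ℕ => (β : ℚ_[p]) ^ n.factorial) atTop (𝓝 0) :=
    (tendsto_pow_atTop_nhds_zero_of_norm_lt_one (by rwa [← PadicInt.norm_def])).comp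
      factorial_tendsto_atTop
  push_cast
  simpa [eigenproj] using tendsto_pow_eigenproj hαβ hα_lim hβ_lim
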